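/- Let f : Matrix(d,o,ℝ) → ℝ be λ-strongly convex (λ>0) with minimizer W*, on a filtered probability space let (W_t)_{t≥1} be a sequence of d×o random matrices adapted to a filtration (F_t), and let (G_t)_{t≥1} be d×o random matrices such that for every t: E[G_t | F_t] = ∇f(W_t) almost surely, E[‖G_t‖_F²] ≤ u for a constant u ≥ 0, and W_{t+1} = W_t − (1/(λt))·G_t. Then for every T ≥ 1, E[‖W_T − W*‖_F²] ≤ 4u/(λ²T). -/

import Mathlib

/-!
Strong convexity at the minimizer gives `λ ‖W - W*‖² ≤ ⟪∇f W, W - W*⟫`. Expanding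
`‖W_{t+1} - W*‖² = ‖W_t - W*‖² - 2η_t ⟪G_t, W_t - W*⟫ + η_t² ‖G_t‖²` and pulling the
`ℱ_t`-measurable factor `W_t - W*` out of `E[G_t | ℱ_t] = ∇f W_t`, the cross term is at least
`λ E‖W_t - W*‖²`, so `a_t = E‖W_t - W*‖²` obeys `a_{t+1} ≤ (1 - 2/t) a_t + u/(λ² t²)`, and
`a_t ≤ 4u/(λ² t)` follows by induction on `t`.
-/

open MeasureTheory

theorem ConvexOn.fderiv_apply_sub_le {E : Type*} [NormedAddCommGroup E] [NormedSpace ℝ E]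
    {g : E → ℝ} (hg : ConvexOn ℝ Set.univ g) {a : E} (ha : DifferentiableAt ℝ g a) (b : E) :
    fderiv ℝ g a (b - a) ≤ g b - g a := by
  have hline : ConvexOn ℝ Set.univ (g ∘ AffineMap.lineMap (k := ℝ) a b) := by
    simpa using hg.comp_affineMap (AffineMap.lineMap a b)
  have hga : HasFDerivAt g (fderiv ℝ g a) (AffineMap.lineMap a b (0 : ℝ)) := by
    rw [AffineMap.lineMap_apply_zero]
    exact ha.hasFDerivAt
  have hderiv : HasDerivAt (g ∘ AffineMap.lineMap (k := ℝ) a b) (fderiv ℝ g a (b - a)) 0 :=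
    hga.comp_hasDerivAt 0 AffineMap.hasDerivAt_lineMap
  have := hline.deriv_le_slope (Set.mem_univ 0) (Set.mem_univ 1) one_pos hderiv.differentiableAt
  simpa [hderiv.deriv, slope_def_field] using this

theorem ConvexOn.fderiv_sub_fderiv_apply_sub_nonneg {E : Type*} [NormedAddCommGroup E]
    [NormedSpace ℝ E] {g : E → ℝ} (hg : ConvexOn ℝ Set.univ g) {a b : E}
    (ha : DifferentiableAt ℝ g a) (hb : DifferentiableAt ℝ g b) :
    0 ≤ (fderiv ℝ g b - fderiv ℝ g a) (b - a) := by
  have hab := hg.fderiv_apply_sub_le ha b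
  have hba := hg.fderiv_apply_sub_le hb a
  rw [← neg_sub, map_neg] at hba
  rw [sub_apply]
  linarith

theorem mul_sq_norm_sub_le_inner_gradient_sub {E : Type*} [NormedAddCommGroup E]
    [InnerProductSpace ℝ E] [CompleteSpace E] {f : E → ℝ} {lam : ℝ}
    (hconv : ConvexOn ℝ Set.univ fun x => f x - lam / 2 * ‖x‖ ^ 2) (hdiff : Differentiable ℝ f)
    {xstar : E} (hmin : ∀ x, f xstar ≤ f x) (x : E) :
    lam * ‖x - xstar‖ ^ 2 ≤ inner ℝ (gradient f x) (x - xstar) := by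
  have hderiv : ∀ y, HasFDerivAt (fun x => f x - lam / 2 * ‖x‖ ^ 2)
      (fderiv ℝ f y - lam • innerSL ℝ y) y := by
    intro y
    refine ((hdiff y).hasFDerivAt.sub
      ((hasFDerivAt_id y).norm_sq.const_mul (lam / 2))).congr_fderiv ?_
    ext v
    simp
    ring
  have hmono := hconv.fderiv_sub_fderiv_apply_sub_nonneg (hderiv xstar).differentiableAt
    (hderiv x).differentiableAt
  have hcrit : fderiv ℝ f xstar = 0 := IsLocalMin.fderiv_eq_zero (.of_forall hmin)
  rw [(hderiv x).fderiv, (hderiv xstar).fderiv, hcrit] at hmono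
  rw [gradient, InnerProductSpace.toDual_symm_apply, ← real_inner_self_eq_norm_sq]
  simp only [sub_apply, smul_apply, innerSL_apply_apply,
    zero_apply, inner_sub_left, smul_eq_mul] at hmono ⊢
  linarith

theorem le_four_mul_div_of_le_one_sub_two_div_mul_add {a : ℕ → ℝ} {c : ℝ} (ha : ∀ t, 0 ≤ a t)
    (hrec : ∀ t : ℕ, 1 ≤ t → a (t + 1) ≤ (1 - 2 / t) * a t + c / t ^ 2) {T : ℕ} (hT : 1 ≤ T) :
    a T ≤ 4 * c / T := by
  -- at `t = 1` the coefficient `1 - 2/t` is negative, so nonnegativity of `a 2` bounds `a 1`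
  have hc : a 1 ≤ c := by
    have h1 := hrec 1 le_rfl
    norm_num at h1
    linarith [ha 2]
  induction T, hT using Nat.le_induction with
  | base => norm_num; linarith [ha 1]
  | succ T hT ih =>
    rcases hT.eq_or_lt with rfl | hT2
    · have h1 := hrec 1 le_rfl
      norm_num at h1 ⊢
      linarith [ha 1]
    · have hT2' : (2 : ℝ) ≤ T := by exact_mod_cast hT2
      have hc0 : 0 ≤ c := (ha 1).trans hc
      have hgap : 4 * c / (T + 1) - ((1 - 2 / T) * (4 * c / T) + c / T ^ 2)
          = c * (3 * T + 7) / (T ^ 2 * (T + 1)) := by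
        field_simp
        ring
      have hcoef : 0 ≤ 1 - 2 / (T : ℝ) := by
        rw [sub_nonneg, div_le_one (by linarith)]
        exact hT2'
      calc a (T + 1) ≤ (1 - 2 / T) * a T + c / T ^ 2 := hrec T hT
        _ ≤ (1 - 2 / T) * (4 * c / T) + c / T ^ 2 := by gcongr
        _ ≤ 4 * c / ↑(T + 1) := by
          push_cast
          linarith [show 0 ≤ c * (3 * T + 7) / (T ^ 2 * (T + 1)) by positivity]

theorem mul_integral_sq_norm_le_integral_inner {Ω E : Type*} [NormedAddCommGroup E]
    [InnerProductSpace ℝ E] [CompleteSpace E] {m m0 : MeasurableSpace Ω} {μ : Measure Ω}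
    [IsFiniteMeasure μ] (hm : m ≤ m0) {X G D : Ω → E} (hX : StronglyMeasurable[m] X)
    (hXsq : Integrable (fun ω => ‖X ω‖ ^ 2) μ) (hGX : Integrable (fun ω => inner ℝ (G ω) (X ω)) μ)
    (hG : Integrable G μ) (hGD : μ[G|m] =ᵐ[μ] D) {c : ℝ}
    (hD : ∀ ω, c * ‖X ω‖ ^ 2 ≤ inner ℝ (D ω) (X ω)) :
    c * ∫ ω, ‖X ω‖ ^ 2 ∂μ ≤ ∫ ω, inner ℝ (G ω) (X ω) ∂μ := by
  have hpull : μ[fun ω => inner ℝ (G ω) (X ω)|m] =ᵐ[μ] fun ω => inner ℝ (μ[G|m] ω) (X ω) :=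
    condExp_bilin_of_stronglyMeasurable_right (innerSL ℝ) hX hGX hG
  calc c * ∫ ω, ‖X ω‖ ^ 2 ∂μ = ∫ ω, c * ‖X ω‖ ^ 2 ∂μ := (integral_const_mul _ _).symm
    _ ≤ ∫ ω, μ[fun ω => inner ℝ (G ω) (X ω)|m] ω ∂μ := by
      refine integral_mono_ae (hXsq.const_mul c) integrable_condExp ?_
      filter_upwards [hpull, hGD] with ω hpullω hGDω
      rw [hpullω, hGDω]
      exact hD ω
    _ = ∫ ω, inner ℝ (G ω) (X ω) ∂μ := integral_condExp hm

theorem integral_sq_norm_sub_smul_le {Ω E : Type*} [NormedAddCommGroup E]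
    [InnerProductSpace ℝ E] [CompleteSpace E] {m m0 : MeasurableSpace Ω} {μ : Measure Ω}
    [IsFiniteMeasure μ] (hm : m ≤ m0) {X G D : Ω → E} (hX : StronglyMeasurable[m] X)
    (hG : MemLp G 2 μ) (hGD : μ[G|m] =ᵐ[μ] D) {c η : ℝ}
    (hD : ∀ ω, c * ‖X ω‖ ^ 2 ≤ inner ℝ (D ω) (X ω)) (hη : 0 ≤ η) :
    ∫ ω, ‖X ω - η • G ω‖ ^ 2 ∂μ
      ≤ (1 - 2 * η * c) * ∫ ω, ‖X ω‖ ^ 2 ∂μ + η ^ 2 * ∫ ω, ‖G ω‖ ^ 2 ∂μ := by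
  have hXae : AEStronglyMeasurable X μ := (hX.mono hm).aestronglyMeasurable
  by_cases hXsq : Integrable (fun ω => ‖X ω‖ ^ 2) μ
  · have hXL2 : MemLp X 2 μ := (memLp_two_iff_integrable_sq_norm hXae).2 hXsq
    have hGX : Integrable (fun ω => inner ℝ (G ω) (X ω)) μ :=
      memLp_one_iff_integrable.1 ((innerSL ℝ).memLp_of_bilin 1 hG hXL2)
    have hGsq : Integrable (fun ω => ‖G ω‖ ^ 2) μ := (memLp_two_iff_integrable_sq_norm hG.1).1 hG
    have hexpand : ∀ ω, ‖X ω - η • G ω‖ ^ 2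
        = ‖X ω‖ ^ 2 - 2 * η * inner ℝ (G ω) (X ω) + η ^ 2 * ‖G ω‖ ^ 2 := by
      intro ω
      rw [norm_sub_sq_real, real_inner_smul_right, norm_smul, mul_pow, Real.norm_eq_abs, sq_abs,
        real_inner_comm]
      ring
    have hcross := mul_integral_sq_norm_le_integral_inner hm hX hXsq hGX
      (hG.integrable one_le_two) hGD hD
    simp_rw [hexpand]
    have hXGX : Integrable (fun ω => ‖X ω‖ ^ 2 - 2 * η * inner ℝ (G ω) (X ω)) μ :=
      hXsq.sub (hGX.const_mul _)
    rw [integral_add hXGX (hGsq.const_mul _), integral_sub hXsq (hGX.const_mul _),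
      integral_const_mul, integral_const_mul]
    linarith [mul_le_mul_of_nonneg_left hcross (by positivity : 0 ≤ 2 * η)]
  · -- both integrals take the junk value `0`
    have hXGsq : ¬Integrable (fun ω => ‖X ω - η • G ω‖ ^ 2) μ := by
      intro h
      refine hXsq ((memLp_two_iff_integrable_sq_norm hXae).1 ?_)
      have h' := (memLp_two_iff_integrable_sq_norm (hXae.sub (hG.1.const_smul η))).2 h
      simpa using h'.add (hG.const_smul η)
    rw [integral_undef hXsq, integral_undef hXGsq, mul_zero, zero_add]
    exact mul_nonneg (sq_nonneg η) (integral_nonneg fun ω => sq_nonneg _)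

theorem stmt_7_general (d o : ℕ)
    (Ω : Type*) [m0 : MeasurableSpace Ω] (μ : Measure Ω) [IsProbabilityMeasure μ]
    (ℱ : Filtration ℕ m0)
    (f : EuclideanSpace ℝ (Fin d × Fin o) → ℝ)
    (lam : ℝ) (hlam : 0 < lam)
    (hconv : ConvexOn ℝ Set.univ fun V => f V - lam / 2 * ‖V‖ ^ 2)
    (hdiff : Differentiable ℝ f)
    (Wstar : EuclideanSpace ℝ (Fin d × Fin o))
    (hmin : ∀ V, f Wstar ≤ f V)
    (W G : ℕ → Ω → EuclideanSpace ℝ (Fin d × Fin o))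
    (hadapt : Adapted ℱ W)
    (u : ℝ)
    (hL2 : ∀ t, MemLp (G t) 2 μ)
    (hunbiased : ∀ t, 1 ≤ t → μ[G t|ℱ t] =ᵐ[μ] fun ω => gradient f (W t ω))
    (hbound : ∀ t, 1 ≤ t → ∫ ω, ‖G t ω‖ ^ 2 ∂μ ≤ u)
    (hupdate : ∀ t : ℕ, 1 ≤ t → W (t + 1) = fun ω => W t ω - (1 / (lam * t)) • G t ω) :
    ∀ T : ℕ, 1 ≤ T → ∫ ω, ‖W T ω - Wstar‖ ^ 2 ∂μ ≤ 4 * u / (lam ^ 2 * T) := by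
  intro T hT
  have hrec : ∀ t : ℕ, 1 ≤ t → ∫ ω, ‖W (t + 1) ω - Wstar‖ ^ 2 ∂μ
      ≤ (1 - 2 / t) * ∫ ω, ‖W t ω - Wstar‖ ^ 2 ∂μ + u / lam ^ 2 / t ^ 2 := by
    intro t ht
    have hstep := integral_sq_norm_sub_smul_le (X := fun ω => W t ω - Wstar)
      (η := 1 / (lam * t)) (ℱ.le t) ((hadapt t).stronglyMeasurable.sub stronglyMeasurable_const)
      (hL2 t) (hunbiased t ht)
      (fun ω => mul_sq_norm_sub_le_inner_gradient_sub hconv hdiff hmin (W t ω))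
      (by positivity)
    have hGbound := mul_le_mul_of_nonneg_left (hbound t ht) (sq_nonneg (1 / (lam * t)))
    calc ∫ ω, ‖W (t + 1) ω - Wstar‖ ^ 2 ∂μ
        = ∫ ω, ‖(W t ω - Wstar) - (1 / (lam * t)) • G t ω‖ ^ 2 ∂μ := by
          simp only [hupdate t ht, sub_right_comm]
      _ ≤ _ := hstep
      _ ≤ (1 - 2 / t) * ∫ ω, ‖W t ω - Wstar‖ ^ 2 ∂μ + u / lam ^ 2 / t ^ 2 := by
          field_simp at hGbound ⊢
          linarith
  calc ∫ ω, ‖W T ω - Wstar‖ ^ 2 ∂μ ≤ 4 * (u / lam ^ 2) / T :=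
        le_four_mul_div_of_le_one_sub_two_div_mul_add
          (a := fun t => ∫ ω, ‖W t ω - Wstar‖ ^ 2 ∂μ)
          (fun t => integral_nonneg fun ω => sq_nonneg _) hrec hT
    _ = 4 * u / (lam ^ 2 * T) := by field_simp

/-- Rakhlin et al., Lemma 1, as used for Theorem 2: stochastic gradient
descent with step sizes `η_t = 1/(λt)` on a `λ`-strongly convex differentiable function
`f` on the Euclidean space of `d×o` matrices (Frobenius inner product), with adapted
iterates `W_t`, conditionally unbiased gradient estimates `G_t` with uniformly bounded
second moments `E‖G_t‖² ≤ u`, satisfies `E‖W_T − W*‖² ≤ 4u/(λ²T)` for all `T ≥ 1`. -/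
theorem stmt_7 (d o : ℕ)
    (Ω : Type*) [m0 : MeasurableSpace Ω] (μ : Measure Ω) [IsProbabilityMeasure μ]
    (ℱ : Filtration ℕ m0)
    (f : EuclideanSpace ℝ (Fin d × Fin o) → ℝ)
    (lam : ℝ) (hlam : 0 < lam)
    (hconv : ConvexOn ℝ Set.univ fun V => f V - lam / 2 * ‖V‖ ^ 2)
    (hdiff : Differentiable ℝ f)
    (Wstar : EuclideanSpace ℝ (Fin d × Fin o))
    (hmin : ∀ V, f Wstar ≤ f V)
    (W G : ℕ → Ω → EuclideanSpace ℝ (Fin d × Fin o))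
    (hadapt : Adapted ℱ W)
    (u : ℝ) (hu : 0 ≤ u)
    (hL2 : ∀ t, MemLp (G t) 2 μ)
    (hunbiased : ∀ t, 1 ≤ t → μ[G t|ℱ t] =ᵐ[μ] fun ω => gradient f (W t ω))
    (hbound : ∀ t, 1 ≤ t → ∫ ω, ‖G t ω‖ ^ 2 ∂μ ≤ u)
    (hupdate : ∀ t : ℕ, 1 ≤ t → W (t + 1) = fun ω => W t ω - (1 / (lam * t)) • G t ω) :
    ∀ T : ℕ, 1 ≤ T → ∫ ω, ‖W T ω - Wstar‖ ^ 2 ∂μ ≤ 4 * u / (lam ^ 2 * T) :=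
  stmt_7_general d o Ω (m0 := m0) μ ℱ f lam hlam hconv hdiff Wstar hmin W G hadapt u hL2 hunbiased
    hbound hupdate
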